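/- Let p be a prime, q = p^e a power of p, ℓ an odd prime different from p, and n a positive integer divisible by neither p nor ℓ. Let γ be an integer, τ the least positive integer with γ·q^τ ≡ γ (mod n), and assume ℓ does not divide q^τ − 1; set ρ = ord_ℓ(q^τ), and assume v_ℓ(q^{τρ} − 1) = 1. Then for every f ≥ 1: the number of q-cyclotomic cosets modulo ℓ^f n whose projection to ℤ/nℤ equals c_{n/q}(γ) is f·(ℓ−1)/ρ + 1; for each 0 ≤ m ≤ f−1 exactly (ℓ−1)/ρ of these cosets have size ℓ^{f−m−1}·ρ·τ, and exactly one has size τ. -/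

import Mathlib

/-!
By the Chinese remainder theorem a `q`-cyclotomic coset modulo `ℓ^f n` lying over
`c_{n/q}(γ)` is determined by the orbit of a class `a` modulo `ℓ^f` under multiplication by
`Q = q^τ`, and its size is `τ` times the size of that orbit. The class `0` gives the only coset
of size `τ`. A class of valuation `m < f` is `ℓ^m` times a unit modulo `ℓ^(f-m)`, and lifting
the exponent (`ℓ` odd, `v_ℓ(Q^ρ - 1) = 1`) shows that `Q` has order `ρ ℓ^(f-m-1)` modulo
`ℓ^(f-m)`. So these orbits have size `ρ ℓ^(f-m-1)`, and there are
`φ(ℓ^(f-m)) / (ρ ℓ^(f-m-1)) = (ℓ-1)/ρ` of them.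
-/

/-- The `q`-cyclotomic coset modulo `m` containing (the class of) the integer `γ`,
as a subset of `ZMod m`. -/
def cycCoset (q m : ℕ) (γ : ℤ) : Set (ZMod m) :=
  {x | ∃ j : ℕ, x = (γ : ZMod m) * (q : ZMod m) ^ j}

theorem dvd_iff_of_isLeast_period {P : ℕ → Prop} {τ : ℕ}
    (hP : ∀ a b, P a → (P (a + b) ↔ P b)) (hτ : IsLeast {t | 0 < t ∧ P t} τ) (j : ℕ) :
    P j ↔ τ ∣ j := by
  obtain ⟨⟨hτ0, hPτ⟩, hmin⟩ := hτ
  have hmul : ∀ k, P (τ * k) := by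
    intro k
    induction k with
    | zero => simpa using (hP τ 0 hPτ).1 hPτ
    | succ k ih => rw [mul_add_one]; exact (hP _ _ ih).2 hPτ
  refine ⟨fun hj => ?_, fun ⟨k, hk⟩ => hk ▸ hmul k⟩
  have hmod : P (j % τ) := (hP _ _ (hmul (j / τ))).1 (by rwa [Nat.div_add_mod])
  by_contra hndvd
  have := hmin ⟨Nat.pos_of_ne_zero (mt Nat.dvd_of_mod_eq_zero hndvd), hmod⟩
  exact (Nat.mod_lt j hτ0).not_ge this

theorem isLeast_of_forall_iff_dvd {P : ℕ → Prop} {N : ℕ} (hN : 0 < N) (h : ∀ j, P j ↔ N ∣ j) :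
    IsLeast {j | 0 < j ∧ P j} N :=
  ⟨⟨hN, (h N).2 dvd_rfl⟩, fun j hj => Nat.le_of_dvd hj.1 ((h j).1 hj.2)⟩

theorem ncard_range_eq_card_quotient {G X : Type*} [Group G] (H : Subgroup G) (Φ : G → X)
    (hΦ : ∀ u u', Φ u = Φ u' ↔ u⁻¹ * u' ∈ H) : (Set.range Φ).ncard = Nat.card (G ⧸ H) := by
  have hlift : ∀ u u', QuotientGroup.leftRel H u u' → Φ u = Φ u' := fun u u' h =>
    (hΦ u u').2 (QuotientGroup.leftRel_apply.1 h)
  rw [← Set.range_quotient_lift (s := QuotientGroup.leftRel H) hlift]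
  refine Set.ncard_range_of_injective ?_
  rintro ⟨u⟩ ⟨u'⟩ h
  exact Quotient.sound (QuotientGroup.leftRel_apply.2 ((hΦ u u').1 h))

theorem padicValNat_pow_sub_one {ℓ B : ℕ} [Fact ℓ.Prime] (hℓ : Odd ℓ)
    (hB : padicValNat ℓ (B - 1) = 1) {t : ℕ} (ht : t ≠ 0) :
    padicValNat ℓ (B ^ t - 1) = 1 + padicValNat ℓ t := by
  have hB1 : 1 < B := by
    by_contra h
    simp_all [Nat.sub_eq_zero_of_le (not_lt.1 h)]
  have hdvd : ℓ ∣ B - 1 := dvd_of_one_le_padicValNat hB.ge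
  have hndvd : ¬ ℓ ∣ B := fun h => (Fact.out : ℓ.Prime).one_lt.ne' <| Nat.dvd_one.1 <| by
    simpa [Nat.sub_sub_self hB1.le] using Nat.dvd_sub h hdvd
  simpa [hB] using padicValNat.pow_sub_pow hℓ hB1 (by simpa using hdvd) hndvd ht

theorem ZMod.natCast_pow_eq_one_iff_dvd {A m : ℕ} (hA : A ≠ 0) (k : ℕ) :
    (A : ZMod m) ^ k = 1 ↔ m ∣ A ^ k - 1 := by
  rw [← ZMod.natCast_eq_zero_iff, Nat.cast_sub (Nat.one_le_pow _ _ (Nat.pos_of_ne_zero hA)),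
    sub_eq_zero]
  push_cast
  rfl

theorem ZMod.orderOf_natCast_prime_pow {ℓ A s : ℕ} (hℓ : ℓ.Prime) (hℓ2 : ℓ ≠ 2)
    (hv : padicValNat ℓ (A ^ orderOf (A : ZMod ℓ) - 1) = 1) (hs : s ≠ 0) :
    orderOf (A : ZMod (ℓ ^ s)) = orderOf (A : ZMod ℓ) * ℓ ^ (s - 1) := by
  have : Fact ℓ.Prime := ⟨hℓ⟩
  set ρ := orderOf (A : ZMod ℓ)
  have hρ : ρ ≠ 0 := by
    intro h
    simp [h] at hv
  have hA : A ≠ 0 := by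
    rintro rfl
    simp [zero_pow hρ] at hv
  have hρdvd : ∀ k, ℓ ^ s ∣ A ^ k - 1 → ρ ∣ k := fun k h =>
    orderOf_dvd_of_pow_eq_one <| (ZMod.natCast_pow_eq_one_iff_dvd hA k).2 <|
      (dvd_pow_self ℓ hs).trans h
  have hlift : ∀ t ≠ 0, ℓ ^ s ∣ (A ^ ρ) ^ t - 1 ↔ ℓ ^ (s - 1) ∣ t := by
    intro t ht
    have hne : (A ^ ρ) ^ t - 1 ≠ 0 := by
      have := padicValNat_pow_sub_one (hℓ.odd_of_ne_two hℓ2) hv ht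
      rintro h
      simp [h] at this
      omega
    rw [padicValNat_dvd_iff_le hne, padicValNat_dvd_iff_le ht,
      padicValNat_pow_sub_one (hℓ.odd_of_ne_two hℓ2) hv ht]
    omega
  have key : ∀ k, (A : ZMod (ℓ ^ s)) ^ k = 1 ↔ ρ * ℓ ^ (s - 1) ∣ k := by
    intro k
    rw [ZMod.natCast_pow_eq_one_iff_dvd hA]
    constructor
    · intro h
      obtain ⟨t, rfl⟩ := hρdvd k h
      rcases eq_or_ne t 0 with rfl | ht
      · simp
      rw [pow_mul] at h
      exact mul_dvd_mul_left ρ ((hlift t ht).1 h)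
    · rintro ⟨c, rfl⟩
      rcases eq_or_ne c 0 with rfl | hc
      · simp
      rw [mul_assoc, pow_mul]
      exact (hlift _ (mul_ne_zero (pow_ne_zero _ hℓ.ne_zero) hc)).2 (dvd_mul_right _ _)
  exact Nat.dvd_antisymm (orderOf_dvd_of_pow_eq_one ((key _).2 dvd_rfl))
    ((key _).1 (pow_orderOf_eq_one _))

theorem ZMod.orderOf_natCast_pow_prime_pow {ℓ q τ s : ℕ} (hℓ : ℓ.Prime) (hℓ2 : ℓ ≠ 2)
    (hq : q ≠ 0) (hv : padicValInt ℓ ((q : ℤ) ^ (τ * orderOf ((q : ZMod ℓ) ^ τ)) - 1) = 1)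
    (hs : s ≠ 0) :
    orderOf ((q : ZMod (ℓ ^ s)) ^ τ) = orderOf ((q : ZMod ℓ) ^ τ) * ℓ ^ (s - 1) := by
  have hvNat : padicValNat ℓ ((q ^ τ) ^ orderOf ((q ^ τ : ℕ) : ZMod ℓ) - 1) = 1 := by
    rw [Nat.cast_pow, ← pow_mul, ← padicValInt.of_nat,
      Nat.cast_sub (Nat.one_le_pow _ _ (Nat.pos_of_ne_zero hq))]
    push_cast
    exact hv
  simpa using ZMod.orderOf_natCast_prime_pow hℓ hℓ2 hvNat hs

theorem ZMod.one_lt_orderOf_pow {ℓ q τ : ℕ} (hnd : ¬ (ℓ : ℤ) ∣ (q : ℤ) ^ τ - 1)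
    (hv : padicValInt ℓ ((q : ℤ) ^ (τ * orderOf ((q : ZMod ℓ) ^ τ)) - 1) = 1) :
    1 < orderOf ((q : ZMod ℓ) ^ τ) := by
  have hρ0 : orderOf ((q : ZMod ℓ) ^ τ) ≠ 0 := by
    intro h
    simp [h] at hv
  have hρ1 : orderOf ((q : ZMod ℓ) ^ τ) ≠ 1 := by
    intro h
    refine hnd ((ZMod.intCast_zmod_eq_zero_iff_dvd _ ℓ).1 ?_)
    push_cast
    rw [orderOf_eq_one_iff.1 h, sub_self]
  omega

theorem ZMod.card_units_prime_pow_quotient_zpowers {ℓ s ρ : ℕ} (hℓ : ℓ.Prime) (hs : s ≠ 0)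
    (V : (ZMod (ℓ ^ s))ˣ) (hV : orderOf V = ρ * ℓ ^ (s - 1)) :
    Nat.card ((ZMod (ℓ ^ s))ˣ ⧸ Subgroup.zpowers V) = (ℓ - 1) / ρ := by
  have : NeZero (ℓ ^ s) := ⟨pow_ne_zero s hℓ.ne_zero⟩
  have hcard := Subgroup.card_eq_card_quotient_mul_card_subgroup (Subgroup.zpowers V)
  rw [Nat.card_zpowers, hV, Nat.card_eq_fintype_card, ZMod.card_units_eq_totient,
    Nat.totient_prime_pow hℓ (Nat.pos_of_ne_zero hs)] at hcard
  have hsplit : ℓ - 1 = Nat.card ((ZMod (ℓ ^ s))ˣ ⧸ Subgroup.zpowers V) * ρ :=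
    Nat.eq_of_mul_eq_mul_left (pow_pos hℓ.pos (s - 1)) (by rw [hcard]; ring)
  have hρ : 0 < ρ := Nat.pos_of_ne_zero <| by
    rintro rfl
    have := hℓ.two_le
    omega
  rw [hsplit, Nat.mul_div_cancel _ hρ]

-- Its least element is the size of `cycCoset q M δ`.
def cosetPeriods (q M : ℕ) (δ : ℤ) : Set ℕ :=
  {j | 0 < j ∧ δ * (q : ℤ) ^ j ≡ δ [ZMOD (M : ℤ)]}

section CycCoset

variable {q M : ℕ}

theorem self_mem_cycCoset (δ : ℤ) : (δ : ZMod M) ∈ cycCoset q M δ := ⟨0, by simp⟩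

theorem cycCoset_congr {δ δ' : ℤ} (h : (δ : ZMod M) = δ') : cycCoset q M δ = cycCoset q M δ' := by
  simp only [cycCoset, h]

theorem cycCoset_subset_of_mem {δ δ' : ℤ} (h : (δ' : ZMod M) ∈ cycCoset q M δ) :
    cycCoset q M δ' ⊆ cycCoset q M δ := by
  obtain ⟨i, hi⟩ := h
  rintro _ ⟨j, rfl⟩
  exact ⟨i + j, by rw [hi, pow_add, mul_assoc]⟩

theorem ZMod.natCast_pow_totient (hq : q.Coprime M) : (q : ZMod M) ^ M.totient = 1 := by
  simpa using (ZMod.natCast_eq_natCast_iff _ _ _).2 (Nat.ModEq.pow_totient hq)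

theorem mem_cycCoset_comm [NeZero M] (hq : q.Coprime M) {δ δ' : ℤ}
    (h : (δ' : ZMod M) ∈ cycCoset q M δ) : (δ : ZMod M) ∈ cycCoset q M δ' := by
  obtain ⟨j, hj⟩ := h
  have hφ : 0 < M.totient := Nat.totient_pos.2 (Nat.pos_of_ne_zero (NeZero.ne M))
  -- `q ^ (j * (φ M - 1))` inverts `q ^ j`
  refine ⟨j * (M.totient - 1), ?_⟩
  rw [hj, mul_assoc, ← pow_add, ← mul_one_add, show 1 + (M.totient - 1) = M.totient by omega,
    mul_comm j, pow_mul, ZMod.natCast_pow_totient hq, one_pow, mul_one]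

theorem cycCoset_eq_iff [NeZero M] (hq : q.Coprime M) (δ δ' : ℤ) :
    cycCoset q M δ = cycCoset q M δ' ↔ (δ' : ZMod M) ∈ cycCoset q M δ :=
  ⟨fun h => h ▸ self_mem_cycCoset δ', fun h =>
    (cycCoset_subset_of_mem (mem_cycCoset_comm hq h)).antisymm (cycCoset_subset_of_mem h)⟩

theorem cosetPeriods_eq_of_mem [NeZero M] (hq : q.Coprime M) {δ δ' : ℤ}
    (h : (δ' : ZMod M) ∈ cycCoset q M δ) : cosetPeriods q M δ' = cosetPeriods q M δ := by
  obtain ⟨i, hi⟩ := h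
  have hu : IsUnit ((q : ZMod M) ^ i) := ((ZMod.isUnit_iff_coprime q M).2 hq).pow i
  ext j
  simp only [cosetPeriods, Set.mem_ofPred_eq, ← ZMod.intCast_eq_intCast_iff]
  push_cast
  rw [hi, mul_right_comm, hu.mul_left_inj]

theorem image_castHom_cycCoset {n : ℕ} (h : n ∣ M) (δ : ℤ) :
    ZMod.castHom h (ZMod n) '' cycCoset q M δ = cycCoset q n δ := by
  ext x
  simp only [cycCoset, Set.mem_image, Set.mem_ofPred_eq]
  constructor
  · rintro ⟨_, ⟨j, rfl⟩, rfl⟩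
    exact ⟨j, by simp only [map_mul, map_pow, map_intCast, map_natCast]⟩
  · rintro ⟨j, rfl⟩
    exact ⟨_, ⟨j, rfl⟩, by simp only [map_mul, map_pow, map_intCast, map_natCast]⟩

theorem intCast_mem_cycCoset_iff {δ δ' : ℤ} :
    (δ' : ZMod M) ∈ cycCoset q M δ ↔ ∃ j : ℕ, δ * (q : ℤ) ^ j ≡ δ' [ZMOD M] := by
  simp only [cycCoset, Set.mem_ofPred_eq, ← ZMod.intCast_eq_intCast_iff,
    eq_comm (a := (δ' : ZMod M))]
  push_cast
  rfl

end CycCoset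

def crtLift (L n : ℕ) (γ a : ℤ) : ℤ :=
  a * n * L.gcdB n + γ * L * L.gcdA n

section CrtLift

variable {q L n τ : ℕ} {γ : ℤ}

theorem crtLift_modEq_left (h : L.Coprime n) (γ a : ℤ) : crtLift L n γ a ≡ a [ZMOD L] := by
  have hbez := Nat.gcd_eq_gcd_ab L n
  rw [h.gcd_eq_one, Nat.cast_one] at hbez
  refine (Int.modEq_iff_dvd.2 ⟨(γ - a) * L.gcdA n, ?_⟩).symm
  unfold crtLift
  linear_combination -a * hbez

theorem crtLift_modEq_right (h : L.Coprime n) (γ a : ℤ) : crtLift L n γ a ≡ γ [ZMOD n] := by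
  have hbez := Nat.gcd_eq_gcd_ab L n
  rw [h.gcd_eq_one, Nat.cast_one] at hbez
  refine (Int.modEq_iff_dvd.2 ⟨(a - γ) * L.gcdB n, ?_⟩).symm
  unfold crtLift
  linear_combination -γ * hbez

theorem modEq_mul_iff_of_coprime (h : L.Coprime n) {x y : ℤ} :
    x ≡ y [ZMOD ((L * n : ℕ) : ℤ)] ↔ x ≡ y [ZMOD L] ∧ x ≡ y [ZMOD n] := by
  rw [Nat.cast_mul, ← Int.modEq_and_modEq_iff_modEq_mul (by simpa using h)]

theorem modEq_iff_dvd_of_isLeast (hτ : IsLeast (cosetPeriods q n γ) τ) (j : ℕ) :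
    γ * (q : ℤ) ^ j ≡ γ [ZMOD n] ↔ τ ∣ j := by
  refine dvd_iff_of_isLeast_period (fun a b ha => ?_) hτ j
  have hab : γ * (q : ℤ) ^ (a + b) ≡ γ * (q : ℤ) ^ b [ZMOD n] := by
    rw [pow_add, ← mul_assoc]
    exact ha.mul_right _
  exact ⟨hab.symm.trans, hab.trans⟩

theorem crtLift_mul_pow_modEq_iff (hco : L.Coprime n) (hτ : IsLeast (cosetPeriods q n γ) τ)
    (a b : ℤ) (j : ℕ) :
    crtLift L n γ a * (q : ℤ) ^ j ≡ crtLift L n γ b [ZMOD ((L * n : ℕ) : ℤ)] ↔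
      a * (q : ℤ) ^ j ≡ b [ZMOD L] ∧ τ ∣ j := by
  rw [modEq_mul_iff_of_coprime hco, ← modEq_iff_dvd_of_isLeast hτ]
  have hL := ((crtLift_modEq_left hco γ a).mul_right ((q : ℤ) ^ j))
  have hn := ((crtLift_modEq_right hco γ a).mul_right ((q : ℤ) ^ j))
  rw [Int.ModEq] at hL hn
  rw [Int.ModEq, Int.ModEq, hL, hn, crtLift_modEq_left hco γ b, crtLift_modEq_right hco γ b]
  rfl

theorem cycCoset_crtLift_eq_iff [NeZero (L * n)] (hq : q.Coprime (L * n)) (hco : L.Coprime n)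
    (hτ : IsLeast (cosetPeriods q n γ) τ) (a b : ℤ) :
    cycCoset q (L * n) (crtLift L n γ a) = cycCoset q (L * n) (crtLift L n γ b) ↔
      ∃ k : ℕ, a * (q : ℤ) ^ (τ * k) ≡ b [ZMOD L] := by
  simp only [cycCoset_eq_iff hq, intCast_mem_cycCoset_iff, crtLift_mul_pow_modEq_iff hco hτ]
  constructor
  · rintro ⟨_, h, k, rfl⟩
    exact ⟨k, h⟩
  · rintro ⟨k, h⟩
    exact ⟨τ * k, h, dvd_mul_right τ k⟩

theorem isLeast_cosetPeriods_crtLift_of_dvd (hco : L.Coprime n)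
    (hτ : IsLeast (cosetPeriods q n γ) τ) {a : ℤ} (ha : (L : ℤ) ∣ a) :
    IsLeast (cosetPeriods q (L * n) (crtLift L n γ a)) τ := by
  refine isLeast_of_forall_iff_dvd hτ.1.1 fun j => ?_
  rw [crtLift_mul_pow_modEq_iff hco hτ, and_iff_right_iff_imp]
  intro
  have ha0 := Int.modEq_zero_iff_dvd.2 ha
  exact (ha0.mul_right _).trans (by simpa using ha0.symm)

def cosetsOver (q L n : ℕ) (γ : ℤ) : Set (Set (ZMod (L * n))) :=
  {C | ∃ δ : ℤ, C = cycCoset q (L * n) δ ∧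
    ZMod.castHom (dvd_mul_left n L) (ZMod n) '' C = cycCoset q n γ}

def cosetsOverOfSize (q L n : ℕ) (γ : ℤ) (V : ℕ) : Set (Set (ZMod (L * n))) :=
  {C | ∃ δ : ℤ, C = cycCoset q (L * n) δ ∧
    ZMod.castHom (dvd_mul_left n L) (ZMod n) '' C = cycCoset q n γ ∧
    IsLeast (cosetPeriods q (L * n) δ) V}

theorem cosetsOverOfSize_subset (V : ℕ) : cosetsOverOfSize q L n γ V ⊆ cosetsOver q L n γ :=
  fun _ ⟨δ, hC, hproj, _⟩ => ⟨δ, hC, hproj⟩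

theorem exists_eq_cycCoset_crtLift [NeZero (L * n)] (hq : q.Coprime (L * n))
    (hco : L.Coprime n) {C : Set (ZMod (L * n))} (hC : C ∈ cosetsOver q L n γ) :
    ∃ a, C = cycCoset q (L * n) (crtLift L n γ a) := by
  obtain ⟨δ, rfl, hproj⟩ := hC
  rw [image_castHom_cycCoset] at hproj
  obtain ⟨j, hj⟩ := intCast_mem_cycCoset_iff.1 (hproj ▸ self_mem_cycCoset (q := q) γ)
  -- `δ q^j` lies in the coset and, being `≡ γ (mod n)`, is congruent to its own lift
  refine ⟨δ * (q : ℤ) ^ j, (cycCoset_eq_iff hq _ _).2 (intCast_mem_cycCoset_iff.2 ⟨j, ?_⟩)⟩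
  rw [modEq_mul_iff_of_coprime hco]
  exact ⟨(crtLift_modEq_left hco γ _).symm, hj.trans (crtLift_modEq_right hco γ _).symm⟩

theorem cycCoset_crtLift_mem_cosetsOverOfSize (hco : L.Coprime n) {a : ℤ} {V : ℕ}
    (h : IsLeast (cosetPeriods q (L * n) (crtLift L n γ a)) V) :
    cycCoset q (L * n) (crtLift L n γ a) ∈ cosetsOverOfSize q L n γ V := by
  refine ⟨_, rfl, ?_, h⟩
  rw [image_castHom_cycCoset]
  exact cycCoset_congr ((ZMod.intCast_eq_intCast_iff _ _ _).2 (crtLift_modEq_right hco γ a))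

theorem eq_of_mem_cosetsOverOfSize [NeZero (L * n)] (hq : q.Coprime (L * n))
    {C : Set (ZMod (L * n))} {V V' : ℕ} (hV : C ∈ cosetsOverOfSize q L n γ V)
    (hV' : C ∈ cosetsOverOfSize q L n γ V') : V = V' := by
  obtain ⟨δ, rfl, -, hδ⟩ := hV
  obtain ⟨δ', hC, -, hδ'⟩ := hV'
  rw [← cosetPeriods_eq_of_mem hq ((cycCoset_eq_iff hq δ δ').1 hC)] at hδ
  exact hδ.unique hδ'

end CrtLift

theorem Int.natCast_pow_mul_modEq_iff {ℓ m f : ℕ} (hℓ : ℓ ≠ 0) (hm : m ≤ f) (x y : ℤ) :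
    (ℓ : ℤ) ^ m * x ≡ (ℓ : ℤ) ^ m * y [ZMOD ((ℓ ^ f : ℕ) : ℤ)] ↔
      x ≡ y [ZMOD ((ℓ ^ (f - m) : ℕ) : ℤ)] := by
  have hsplit : ((ℓ ^ f : ℕ) : ℤ) = (ℓ : ℤ) ^ m * ((ℓ ^ (f - m) : ℕ) : ℤ) := by
    push_cast
    rw [← pow_add, Nat.add_sub_cancel' hm]
  rw [hsplit, Int.ModEq.mul_left_cancel_iff' (pow_ne_zero _ (by exact_mod_cast hℓ))]

theorem pow_mul_mul_ne_self {ℓ k ρ τ : ℕ} (hρ : 2 ≤ ρ) (hτ : 0 < τ) : ℓ ^ k * ρ * τ ≠ τ := by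
  intro h
  have : ℓ ^ k * ρ = 1 := Nat.eq_of_mul_eq_mul_right hτ (by rw [h, one_mul])
  have := (mul_eq_one.1 this).2
  omega

theorem eq_of_pow_sub_mul_mul_eq {ℓ f m m' ρ τ : ℕ} (hℓ : 2 ≤ ℓ) (hρτ : 0 < ρ * τ) (hm : m < f)
    (hm' : m' < f) (h : ℓ ^ (f - m - 1) * ρ * τ = ℓ ^ (f - m' - 1) * ρ * τ) : m = m' := by
  rw [mul_assoc, mul_assoc] at h
  have := Nat.pow_right_injective hℓ (Nat.eq_of_mul_eq_mul_right hρτ h)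
  omega

-- The coset over `c_{n/q}(γ)` whose component modulo `ℓ^f` is `ℓ^m w`.
def liftCoset (q ℓ n f : ℕ) (γ : ℤ) (m : ℕ) (w : (ZMod (ℓ ^ (f - m)))ˣ) :
    Set (ZMod (ℓ ^ f * n)) :=
  cycCoset q (ℓ ^ f * n) (crtLift (ℓ ^ f) n γ (ℓ ^ m * (w : ZMod (ℓ ^ (f - m))).valMinAbs))

section LiftCoset

variable {q ℓ n f τ ρ m : ℕ} {γ : ℤ}

theorem cycCoset_crtLift_pow_mul_eq_iff [NeZero (ℓ ^ f * n)] (hℓ : ℓ ≠ 0)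
    (hq : q.Coprime (ℓ ^ f * n)) (hco : (ℓ ^ f).Coprime n) (hτ : IsLeast (cosetPeriods q n γ) τ) (hm : m ≤ f) (x y : ℤ) :
    cycCoset q (ℓ ^ f * n) (crtLift (ℓ ^ f) n γ (ℓ ^ m * x)) =
        cycCoset q (ℓ ^ f * n) (crtLift (ℓ ^ f) n γ (ℓ ^ m * y)) ↔
      ∃ k : ℕ, x * (q : ℤ) ^ (τ * k) ≡ y [ZMOD ((ℓ ^ (f - m) : ℕ) : ℤ)] := by
  simp only [cycCoset_crtLift_eq_iff hq hco hτ, mul_assoc, Int.natCast_pow_mul_modEq_iff hℓ hm]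

theorem liftCoset_eq_liftCoset_iff [NeZero (ℓ ^ f * n)] (hℓ : ℓ ≠ 0) (hq : q.Coprime (ℓ ^ f * n))
    (hco : (ℓ ^ f).Coprime n) (hτ : IsLeast (cosetPeriods q n γ) τ) (hm : m ≤ f)
    {V : (ZMod (ℓ ^ (f - m)))ˣ} (hV : (V : ZMod (ℓ ^ (f - m))) = (q : ZMod (ℓ ^ (f - m))) ^ τ)
    (u u' : (ZMod (ℓ ^ (f - m)))ˣ) :
    liftCoset q ℓ n f γ m u = liftCoset q ℓ n f γ m u' ↔ u⁻¹ * u' ∈ Subgroup.zpowers V := by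
  rw [liftCoset, liftCoset, cycCoset_crtLift_pow_mul_eq_iff hℓ hq hco hτ hm,
    ← mem_powers_iff_mem_zpowers, Submonoid.mem_powers_iff]
  simp only [← ZMod.intCast_eq_intCast_iff, Int.cast_mul, Int.cast_pow, Int.cast_natCast,
    ZMod.coe_valMinAbs, eq_inv_mul_iff_mul_eq, Units.ext_iff, Units.val_mul,
    Units.val_pow_eq_pow_val, hV, pow_mul]

theorem liftCoset_mem_cosetsOverOfSize (hℓ : ℓ ≠ 0) (hco : (ℓ ^ f).Coprime n)
    (hτ : IsLeast (cosetPeriods q n γ) τ) (hm : m < f) (hρ : 0 < ρ)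
    (hord : orderOf ((q : ZMod (ℓ ^ (f - m))) ^ τ) = ρ * ℓ ^ (f - m - 1))
    (w : (ZMod (ℓ ^ (f - m)))ˣ) :
    liftCoset q ℓ n f γ m w ∈ cosetsOverOfSize q (ℓ ^ f) n γ (ℓ ^ (f - m - 1) * ρ * τ) := by
  refine cycCoset_crtLift_mem_cosetsOverOfSize hco (isLeast_of_forall_iff_dvd
    (Nat.mul_pos (Nat.mul_pos (pow_pos (Nat.pos_of_ne_zero hℓ) _) hρ) hτ.1.1) fun j => ?_)
  rw [crtLift_mul_pow_modEq_iff hco hτ, mul_assoc, Int.natCast_pow_mul_modEq_iff hℓ hm.le,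
    ← ZMod.intCast_eq_intCast_iff]
  push_cast
  rw [w.isUnit.mul_eq_left]
  constructor
  · rintro ⟨h, k, rfl⟩
    rw [pow_mul, ← orderOf_dvd_iff_pow_eq_one, hord] at h
    obtain ⟨c, rfl⟩ := h
    exact ⟨c, by ring⟩
  · rintro ⟨c, rfl⟩
    refine ⟨?_, ℓ ^ (f - m - 1) * ρ * c, by ring⟩
    rw [show ℓ ^ (f - m - 1) * ρ * τ * c = τ * (ρ * ℓ ^ (f - m - 1) * c) by ring, pow_mul,
      pow_mul, ← hord, pow_orderOf_eq_one, one_pow]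

theorem mem_cosetsOver_cases [NeZero (ℓ ^ f * n)] (hℓ : ℓ.Prime) (hq : q.Coprime (ℓ ^ f * n))
    (hco : (ℓ ^ f).Coprime n) (hτ : IsLeast (cosetPeriods q n γ) τ) {C : Set (ZMod (ℓ ^ f * n))}
    (hC : C ∈ cosetsOver q (ℓ ^ f) n γ) :
    C = cycCoset q (ℓ ^ f * n) (crtLift (ℓ ^ f) n γ 0) ∨
      ∃ m < f, ∃ w, C = liftCoset q ℓ n f γ m w := by
  obtain ⟨a, rfl⟩ := exists_eq_cycCoset_crtLift hq hco hC
  by_cases ha : ((ℓ ^ f : ℕ) : ℤ) ∣ a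
  · left
    refine (cycCoset_crtLift_eq_iff hq hco hτ a 0).2 ⟨0, ?_⟩
    simpa using Int.modEq_zero_iff_dvd.2 ha
  right
  have ha0 : a ≠ 0 := by
    rintro rfl
    exact ha (dvd_zero _)
  have hfin : FiniteMultiplicity (ℓ : ℤ) a :=
    Int.finiteMultiplicity_iff.2 ⟨by simpa using hℓ.ne_one, ha0⟩
  obtain ⟨b, hab, hb⟩ := hfin.exists_eq_pow_mul_and_not_dvd
  set m := multiplicity (ℓ : ℤ) a
  have hm : m < f := by
    by_contra! h
    exact ha (by push_cast; exact hab ▸ (pow_dvd_pow _ h).mul_right _)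
  have hcop : IsCoprime b ((ℓ ^ (f - m) : ℕ) : ℤ) := by
    push_cast
    exact ((Nat.prime_iff_prime_int.mp hℓ).coprime_iff_not_dvd.2 hb).pow_left.symm
  refine ⟨m, hm, ZMod.unitOfIsCoprime b hcop, ?_⟩
  rw [liftCoset, hab, cycCoset_crtLift_pow_mul_eq_iff hℓ.ne_zero hq hco hτ hm.le]
  refine ⟨0, ?_⟩
  rw [← ZMod.intCast_eq_intCast_iff]
  simp

theorem cosetsOverOfSize_self_eq [NeZero (ℓ ^ f * n)] (hℓ : ℓ.Prime) (hq : q.Coprime (ℓ ^ f * n))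
    (hco : (ℓ ^ f).Coprime n) (hτ : IsLeast (cosetPeriods q n γ) τ) (hρ : 2 ≤ ρ)
    (hord : ∀ s ≠ 0, orderOf ((q : ZMod (ℓ ^ s)) ^ τ) = ρ * ℓ ^ (s - 1)) :
    cosetsOverOfSize q (ℓ ^ f) n γ τ = {cycCoset q (ℓ ^ f * n) (crtLift (ℓ ^ f) n γ 0)} := by
  ext C
  refine ⟨fun hC => ?_, fun hC => hC ▸ cycCoset_crtLift_mem_cosetsOverOfSize hco
    (isLeast_cosetPeriods_crtLift_of_dvd hco hτ (dvd_zero _))⟩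
  rcases mem_cosetsOver_cases hℓ hq hco hτ (cosetsOverOfSize_subset τ hC) with h | ⟨m, hm, w, rfl⟩
  · exact h
  · have hw := liftCoset_mem_cosetsOverOfSize hℓ.ne_zero hco hτ hm (by omega)
      (hord _ (by omega)) w
    exact absurd (eq_of_mem_cosetsOverOfSize hq hw hC) (pow_mul_mul_ne_self hρ hτ.1.1)

theorem cosetsOverOfSize_eq_range [NeZero (ℓ ^ f * n)] (hℓ : ℓ.Prime) (hq : q.Coprime (ℓ ^ f * n))
    (hco : (ℓ ^ f).Coprime n) (hτ : IsLeast (cosetPeriods q n γ) τ) (hρ : 2 ≤ ρ)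
    (hord : ∀ s ≠ 0, orderOf ((q : ZMod (ℓ ^ s)) ^ τ) = ρ * ℓ ^ (s - 1)) (hm : m < f) :
    cosetsOverOfSize q (ℓ ^ f) n γ (ℓ ^ (f - m - 1) * ρ * τ) =
      Set.range (liftCoset q ℓ n f γ m) := by
  ext C
  refine ⟨fun hC => ?_, fun ⟨w, hw⟩ => hw ▸ liftCoset_mem_cosetsOverOfSize hℓ.ne_zero hco hτ hm
    (by omega) (hord _ (by omega)) w⟩
  rcases mem_cosetsOver_cases hℓ hq hco hτ (cosetsOverOfSize_subset _ hC)
    with rfl | ⟨m', hm', w, rfl⟩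
  · have h0 := cycCoset_crtLift_mem_cosetsOverOfSize hco
      (isLeast_cosetPeriods_crtLift_of_dvd hco hτ (dvd_zero (((ℓ ^ f : ℕ) : ℤ))))
    exact absurd (eq_of_mem_cosetsOverOfSize hq hC h0) (pow_mul_mul_ne_self hρ hτ.1.1)
  · have hw := liftCoset_mem_cosetsOverOfSize hℓ.ne_zero hco hτ hm' (by omega)
      (hord _ (by omega)) w
    obtain rfl := eq_of_pow_sub_mul_mul_eq hℓ.two_le (by have := hτ.1.1; positivity) hm hm'
      (eq_of_mem_cosetsOverOfSize hq hC hw)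
    exact ⟨w, rfl⟩

theorem cosetsOver_eq_union [NeZero (ℓ ^ f * n)] (hℓ : ℓ.Prime) (hq : q.Coprime (ℓ ^ f * n))
    (hco : (ℓ ^ f).Coprime n) (hτ : IsLeast (cosetPeriods q n γ) τ) (hρ : 0 < ρ)
    (hord : ∀ s ≠ 0, orderOf ((q : ZMod (ℓ ^ s)) ^ τ) = ρ * ℓ ^ (s - 1)) :
    cosetsOver q (ℓ ^ f) n γ =
      (⋃ m ∈ (Finset.range f : Set ℕ),
        cosetsOverOfSize q (ℓ ^ f) n γ (ℓ ^ (f - m - 1) * ρ * τ)) ∪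
      cosetsOverOfSize q (ℓ ^ f) n γ τ := by
  ext C
  refine ⟨fun hC => ?_, ?_⟩
  · rcases mem_cosetsOver_cases hℓ hq hco hτ hC with rfl | ⟨m, hm, w, rfl⟩
    · exact Or.inr (cycCoset_crtLift_mem_cosetsOverOfSize hco
        (isLeast_cosetPeriods_crtLift_of_dvd hco hτ (dvd_zero _)))
    · exact Or.inl (Set.mem_biUnion (Finset.mem_coe.2 (Finset.mem_range.2 hm))
        (liftCoset_mem_cosetsOverOfSize hℓ.ne_zero hco hτ hm hρ (hord _ (by omega)) w))
  · rintro (hC | hC)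
    · obtain ⟨m, -, hC⟩ := Set.mem_iUnion₂.1 hC
      exact cosetsOverOfSize_subset _ hC
    · exact cosetsOverOfSize_subset _ hC

theorem ncard_cosetsOverOfSize_eq [NeZero (ℓ ^ f * n)] (hℓ : ℓ.Prime) (hq : q.Coprime (ℓ ^ f * n))
    (hco : (ℓ ^ f).Coprime n) (hτ : IsLeast (cosetPeriods q n γ) τ) (hρ : 2 ≤ ρ)
    (hord : ∀ s ≠ 0, orderOf ((q : ZMod (ℓ ^ s)) ^ τ) = ρ * ℓ ^ (s - 1)) (hm : m < f) :
    (cosetsOverOfSize q (ℓ ^ f) n γ (ℓ ^ (f - m - 1) * ρ * τ)).ncard = (ℓ - 1) / ρ := by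
  have hs : f - m ≠ 0 := by omega
  have hqs : q.Coprime (ℓ ^ (f - m)) :=
    hq.coprime_dvd_right (dvd_mul_of_dvd_left (pow_dvd_pow ℓ (Nat.sub_le f m)) n)
  set V := ZMod.unitOfCoprime q hqs ^ τ
  have hV : (V : ZMod (ℓ ^ (f - m))) = (q : ZMod (ℓ ^ (f - m))) ^ τ := by simp [V]
  rw [cosetsOverOfSize_eq_range hℓ hq hco hτ hρ hord hm,
    ncard_range_eq_card_quotient _ _ (liftCoset_eq_liftCoset_iff hℓ.ne_zero hq hco hτ hm.le hV),
    ZMod.card_units_prime_pow_quotient_zpowers hℓ hs V (by rw [← orderOf_units, hV, hord _ hs])]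

theorem ncard_cosetsOver [NeZero (ℓ ^ f * n)] (hℓ : ℓ.Prime) (hq : q.Coprime (ℓ ^ f * n))
    (hco : (ℓ ^ f).Coprime n) (hτ : IsLeast (cosetPeriods q n γ) τ) (hρ : 2 ≤ ρ)
    (hord : ∀ s ≠ 0, orderOf ((q : ZMod (ℓ ^ s)) ^ τ) = ρ * ℓ ^ (s - 1)) :
    (cosetsOver q (ℓ ^ f) n γ).ncard = f * ((ℓ - 1) / ρ) + 1 := by
  rw [cosetsOver_eq_union hℓ hq hco hτ (by omega) hord,
    Set.ncard_union_eq ?disjoint (Set.toFinite _) (Set.toFinite _),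
    (Finset.finite_toSet _).ncard_biUnion (fun _ _ => Set.toFinite _) ?pairwise,
    finsum_mem_coe_finset,
    Finset.sum_congr rfl fun m hm => ncard_cosetsOverOfSize_eq hℓ hq hco hτ hρ hord
      (Finset.mem_range.1 hm),
    Finset.sum_const, Finset.card_range, smul_eq_mul,
    cosetsOverOfSize_self_eq hℓ hq hco hτ hρ hord, Set.ncard_singleton]
  case disjoint =>
    refine Set.disjoint_iUnion₂_left.2 fun m _ => Set.disjoint_left.2 fun C h₁ h₂ => ?_
    exact pow_mul_mul_ne_self hρ hτ.1.1 (eq_of_mem_cosetsOverOfSize hq h₁ h₂)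
  case pairwise =>
    refine fun m hm m' hm' hne => Set.disjoint_left.2 fun C h₁ h₂ => hne ?_
    exact eq_of_pow_sub_mul_mul_eq hℓ.two_le (by have := hτ.1.1; positivity)
      (Finset.mem_range.1 hm) (Finset.mem_range.1 hm') (eq_of_mem_cosetsOverOfSize hq h₁ h₂)

end LiftCoset

theorem stmt_19_general (p e q ℓ n : ℕ) (hp : p.Prime) (hq : q = p ^ e)
    (hℓ : ℓ.Prime) (hℓ2 : ℓ ≠ 2) (hℓp : ℓ ≠ p)
    (hnp : ¬ p ∣ n) (hnℓ : ¬ ℓ ∣ n)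
    (γ : ℤ) (τ : ℕ)
    (hτ : IsLeast {t : ℕ | 0 < t ∧ γ * (q : ℤ) ^ t ≡ γ [ZMOD (n : ℤ)]} τ)
    (hnd : ¬ (ℓ : ℤ) ∣ (q : ℤ) ^ τ - 1)
    (ρ : ℕ) (hρ : ρ = orderOf ((q : ZMod ℓ) ^ τ))
    (hv : padicValInt ℓ ((q : ℤ) ^ (τ * ρ) - 1) = 1) :
    ∀ f : ℕ, 1 ≤ f →
      -- the total number of q-cyclotomic cosets mod ℓ^f n projecting onto c_{n/q}(γ)
      {C : Set (ZMod (ℓ ^ f * n)) | ∃ δ : ℤ, C = cycCoset q (ℓ ^ f * n) δ ∧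
          (ZMod.castHom (dvd_mul_left n (ℓ ^ f)) (ZMod n)) '' C = cycCoset q n γ}.ncard =
        f * (ℓ - 1) / ρ + 1 ∧
      -- for each m < f, exactly (ℓ-1)/ρ of them have size ℓ^(f-m-1)·ρ·τ
      (∀ m, m < f →
        {C : Set (ZMod (ℓ ^ f * n)) | ∃ δ : ℤ, C = cycCoset q (ℓ ^ f * n) δ ∧
            (ZMod.castHom (dvd_mul_left n (ℓ ^ f)) (ZMod n)) '' C = cycCoset q n γ ∧
            IsLeast {j : ℕ | 0 < j ∧ δ * (q : ℤ) ^ j ≡ δ [ZMOD ((ℓ ^ f * n : ℕ) : ℤ)]}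
              (ℓ ^ (f - m - 1) * ρ * τ)}.ncard = (ℓ - 1) / ρ) ∧
      -- exactly one of them has size τ
      {C : Set (ZMod (ℓ ^ f * n)) | ∃ δ : ℤ, C = cycCoset q (ℓ ^ f * n) δ ∧
          (ZMod.castHom (dvd_mul_left n (ℓ ^ f)) (ZMod n)) '' C = cycCoset q n γ ∧
          IsLeast {j : ℕ | 0 < j ∧ δ * (q : ℤ) ^ j ≡ δ [ZMOD ((ℓ ^ f * n : ℕ) : ℤ)]}
            τ}.ncard = 1 := by
  intro f _
  have : Fact ℓ.Prime := ⟨hℓ⟩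
  have hqℓ : q.Coprime ℓ := hq ▸ ((Nat.coprime_primes hp hℓ).2 hℓp.symm).pow_left e
  have hqM : q.Coprime (ℓ ^ f * n) :=
    (hqℓ.pow_right f).mul_right (hq ▸ (hp.coprime_iff_not_dvd.2 hnp).pow_left e)
  have hco : (ℓ ^ f).Coprime n := (hℓ.coprime_iff_not_dvd.2 hnℓ).pow_left f
  have : NeZero (ℓ ^ f * n) :=
    ⟨Nat.mul_ne_zero (pow_ne_zero f hℓ.ne_zero) (by rintro rfl; exact hnℓ (dvd_zero ℓ))⟩
  have hord : ∀ s ≠ 0, orderOf ((q : ZMod (ℓ ^ s)) ^ τ) = ρ * ℓ ^ (s - 1) := fun s hs =>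
    hρ ▸ ZMod.orderOf_natCast_pow_prime_pow hℓ hℓ2 (hq ▸ pow_ne_zero e hp.ne_zero) (hρ ▸ hv) hs
  have hρ2 : 2 ≤ ρ := hρ ▸ ZMod.one_lt_orderOf_pow hnd (hρ ▸ hv)
  have hρdvd : ρ ∣ ℓ - 1 := hρ ▸ ZMod.orderOf_dvd_card_sub_one (pow_ne_zero _
    ((ZMod.natCast_eq_zero_iff _ _).not.2 (hℓ.coprime_iff_not_dvd.1 hqℓ.symm)))
  refine ⟨?_, fun m hm => ncard_cosetsOverOfSize_eq hℓ hqM hco hτ hρ2 hord hm,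
    Set.ncard_eq_one.2 ⟨_, cosetsOverOfSize_self_eq hℓ hqM hco hτ hρ2 hord⟩⟩
  rw [Nat.mul_div_assoc f hρdvd]
  exact ncard_cosetsOver hℓ hqM hco hτ hρ2 hord

theorem stmt_19 (p e q ℓ n : ℕ) (hp : p.Prime) (he : 0 < e) (hq : q = p ^ e)
    (hℓ : ℓ.Prime) (hℓ2 : ℓ ≠ 2) (hℓp : ℓ ≠ p)
    (hn : 0 < n) (hnp : ¬ p ∣ n) (hnℓ : ¬ ℓ ∣ n)
    (γ : ℤ) (τ : ℕ)
    (hτ : IsLeast {t : ℕ | 0 < t ∧ γ * (q : ℤ) ^ t ≡ γ [ZMOD (n : ℤ)]} τ)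
    (hnd : ¬ (ℓ : ℤ) ∣ (q : ℤ) ^ τ - 1)
    (ρ : ℕ) (hρ : ρ = orderOf ((q : ZMod ℓ) ^ τ))
    (hv : padicValInt ℓ ((q : ℤ) ^ (τ * ρ) - 1) = 1) :
    ∀ f : ℕ, 1 ≤ f →
      -- the total number of q-cyclotomic cosets mod ℓ^f n projecting onto c_{n/q}(γ)
      {C : Set (ZMod (ℓ ^ f * n)) | ∃ δ : ℤ, C = cycCoset q (ℓ ^ f * n) δ ∧
          (ZMod.castHom (dvd_mul_left n (ℓ ^ f)) (ZMod n)) '' C = cycCoset q n γ}.ncard =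
        f * (ℓ - 1) / ρ + 1 ∧
      -- for each m < f, exactly (ℓ-1)/ρ of them have size ℓ^(f-m-1)·ρ·τ
      (∀ m, m < f →
        {C : Set (ZMod (ℓ ^ f * n)) | ∃ δ : ℤ, C = cycCoset q (ℓ ^ f * n) δ ∧
            (ZMod.castHom (dvd_mul_left n (ℓ ^ f)) (ZMod n)) '' C = cycCoset q n γ ∧
            IsLeast {j : ℕ | 0 < j ∧ δ * (q : ℤ) ^ j ≡ δ [ZMOD ((ℓ ^ f * n : ℕ) : ℤ)]}
              (ℓ ^ (f - m - 1) * ρ * τ)}.ncard = (ℓ - 1) / ρ) ∧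
      -- exactly one of them has size τ
      {C : Set (ZMod (ℓ ^ f * n)) | ∃ δ : ℤ, C = cycCoset q (ℓ ^ f * n) δ ∧
          (ZMod.castHom (dvd_mul_left n (ℓ ^ f)) (ZMod n)) '' C = cycCoset q n γ ∧
          IsLeast {j : ℕ | 0 < j ∧ δ * (q : ℤ) ^ j ≡ δ [ZMOD ((ℓ ^ f * n : ℕ) : ℤ)]}
            τ}.ncard = 1 :=
  stmt_19_general p e q ℓ n hp hq hℓ hℓ2 hℓp hnp hnℓ γ τ hτ hnd ρ hρ hv
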